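/- arXiv:1504.03988 — 4 statements merged into one kernel-verified Lean document; each statement's English description precedes it below -/
import Mathlib

section
/- Let α_0 → α_1 → ⋯ → α_n be a finite path on the HB diagram 𝒟 of a subshift, with α_0 = b_{-k}...b_0, and let a_i be the last letter of α_i. Then for all i ≤ n, α_i = sig(b_{-k}...b_0 a_1 a_2 ... a_i). -/
open Set Filter Topology

/-- The natural extension of a one-sided subshift: bisequences all of whose
right tails lie in `Xp`. -/
def natExt {A : Type*} (Xp : Set (ℕ → A)) : Set (ℤ → A) :=
  {x | ∀ p : ℤ, (fun n : ℕ => x (p + n)) ∈ Xp}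

/-- The bisequence `x` ends at position `0` with the block `w`,
i.e. `w = x_{-(|w|-1)} ... x_0`. -/
def EndsWith {A : Type*} (x : ℤ → A) (w : List A) : Prop :=
  ∀ i : Fin w.length, x ((i.1 : ℤ) - ((w.length : ℤ) - 1)) = w.get i

/-- The block `w` occurs somewhere in the bisequence `x`. -/
def OccursZ {A : Type*} (w : List A) (x : ℤ → A) : Prop :=
  ∃ p : ℤ, ∀ i : Fin w.length, x (p + i.1) = w.get i

/-- The language of a set of bisequences. -/
def LangZ {A : Type*} (XZ : Set (ℤ → A)) (w : List A) : Prop :=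
  ∃ x ∈ XZ, OccursZ w x

/-- The block `w` occurs at position `p` in the one-sided sequence `a`. -/
def OccursAt {A : Type*} (w : List A) (a : ℕ → A) (p : ℕ) : Prop :=
  ∀ i : Fin w.length, a (p + i.1) = w.get i

/-- The block `w` occurs somewhere in the one-sided sequence `a`. -/
def OccursN {A : Type*} (w : List A) (a : ℕ → A) : Prop :=
  ∃ p : ℕ, OccursAt w a p

/-- The language of a set of one-sided sequences. -/
def LangN {A : Type*} (Xp : Set (ℕ → A)) (w : List A) : Prop :=
  ∃ a ∈ Xp, OccursN w a

/-- The follower set of the block `w` (read as `a_{-n} ... a_0`) in the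
two-sided set `XZ`: the right rays `b_0 b_1 ...` of points `b ∈ XZ`
with `b_{-n} ... b_0 = w`. -/
def fol {A : Type*} (XZ : Set (ℤ → A)) (w : List A) : Set (ℕ → A) :=
  {r | ∃ b ∈ XZ, EndsWith b w ∧ ∀ n : ℕ, r n = b (n : ℤ)}

/-- A block is significant if its follower set strictly decreases when its
first letter is prepended (i.e. `fol w ⊊ fol (w.tail)`). -/
def Significant {A : Type*} (XZ : Set (ℤ → A)) (w : List A) : Prop :=
  w ≠ [] ∧ fol XZ w ⊂ fol XZ w.tail

/-- `SigForm XZ w v` says `v = sig(w)`: `v` is the longest significant suffix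
of `w`. -/
def SigForm {A : Type*} (XZ : Set (ℤ → A)) (w v : List A) : Prop :=
  v <:+ w ∧ Significant XZ v ∧
    ∀ v' : List A, v' <:+ w → Significant XZ v' → v'.length ≤ v.length

/-- Arrow `u → v` of the Hofbauer–Buzzi diagram: both are significant blocks,
`u` extended by the last letter `a` of `v` is in the language, and
`v = sig(u a)`. -/
def Arrow {A : Type*} (XZ : Set (ℤ → A)) (u v : List A) : Prop :=
  Significant XZ u ∧ ∃ a : A, v.getLast? = some a ∧ LangZ XZ (u ++ [a]) ∧
    SigForm XZ (u ++ [a]) v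

/-- A (nonempty closed shift-invariant) one-sided subshift. -/
def IsSubshift {A : Type*} [TopologicalSpace A] (Xp : Set (ℕ → A)) : Prop :=
  Xp.Nonempty ∧ IsClosed Xp ∧ ∀ x ∈ Xp, (fun n => x (n + 1)) ∈ Xp

/-- The complexity function of a one-sided sequence. -/
noncomputable def Complexity {A : Type*} (u : ℕ → A) (n : ℕ) : ℕ :=
  Set.ncard {w : List A | w.length = n ∧ OccursN w u}

/-- The orbit closure of `u` under the shift, described combinatorially:
all sequences each of whose blocks occurs in `u`. -/
def OrbitClosure {A : Type*} (u : ℕ → A) : Set (ℕ → A) :=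
  {x | ∀ w : List A, OccursN w x → OccursN w u}

open Fin.NatCast in
/-- The Prouhet–Thue–Morse sequence: parity of the binary digit sum. -/
def morse (n : ℕ) : Fin 2 := (((Nat.digits 2 n).sum : ℕ) : Fin 2)

/-!
Prepending letters can only shrink follower sets, and in a shift-invariant set the follower set
of `s a` is determined by that of `s`. So if `p ≠ []` is not significant, i.e.
`fol p = fol p.tail`, then `fol (p a) = fol (p.tail a)` and `p a` is not significant either.
Consequently a significant suffix of `w a` is either a suffix of `sig(w) a` or of the form `p a`
with `p` a suffix of `w` longer than `sig(w)`, which is impossible; hence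
`sig(w a) = sig(sig(w) a)`, and the theorem follows by induction along the path.
-/

section

variable {A : Type*}

def ShiftInvariant (XZ : Set (ℤ → A)) : Prop :=
  ∀ x ∈ XZ, ∀ k : ℤ, (fun p => x (p + k)) ∈ XZ

lemma natExt_shiftInvariant (Xp : Set (ℕ → A)) : ShiftInvariant (natExt Xp) := by
  intro x hx k p
  simpa only [add_right_comm] using hx (p + k)

lemma EndsWith.of_isSuffix {x : ℤ → A} {s t : List A} (hx : EndsWith x s) (h : t <:+ s) :
    EndsWith x t := by
  obtain ⟨r, rfl⟩ := h
  intro i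
  have hi := hx ⟨r.length + i, by simp⟩
  simp only [List.get_eq_getElem, List.getElem_append_right (Nat.le_add_right _ _),
    Nat.add_sub_cancel_left] at hi ⊢
  rw [← hi]
  congr 1
  push_cast [List.length_append]
  ring

lemma endsWith_append_singleton_iff {x y : ℤ → A} (hxy : ∀ p, y p = x (p + 1))
    (s : List A) (a : A) :
    EndsWith y (s ++ [a]) ↔ y 0 = a ∧ EndsWith x s := by
  simp only [EndsWith, List.get_eq_getElem]
  constructor
  · intro h
    refine ⟨?_, fun i => ?_⟩
    · simpa using h ⟨s.length, by simp⟩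
    · simpa [List.getElem_append_left i.2, hxy, sub_add] using h ⟨i, by simp⟩
  · rintro ⟨ha, hs⟩ ⟨i, hi⟩
    rcases Nat.lt_succ_iff_lt_or_eq.1 (by simpa using hi) with hi | rfl
    · simpa [List.getElem_append_left hi, hxy, sub_add] using hs ⟨i, hi⟩
    · simpa [hxy] using ha

lemma fol_subset_fol_of_isSuffix (XZ : Set (ℤ → A)) {s t : List A} (h : t <:+ s) :
    fol XZ s ⊆ fol XZ t := by
  rintro r ⟨b, hb, hs, hr⟩
  exact ⟨b, hb, hs.of_isSuffix h, hr⟩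

lemma fol_tail_eq_of_not_significant (XZ : Set (ℤ → A)) {s : List A} (hs : s ≠ [])
    (hns : ¬ Significant XZ s) : fol XZ s = fol XZ s.tail := by
  by_contra hne
  exact hns ⟨hs, ssubset_iff_subset_ne.2 ⟨fol_subset_fol_of_isSuffix XZ s.tail_suffix, hne⟩⟩

lemma SigForm.of_significant {XZ : Set (ℤ → A)} {w : List A} (hw : Significant XZ w) :
    SigForm XZ w w :=
  ⟨List.suffix_refl w, hw, fun _ h _ => h.length_le⟩

namespace ShiftInvariant

variable {XZ : Set (ℤ → A)}

lemma mem_fol_append_singleton_iff (hXZ : ShiftInvariant XZ) (s : List A) (a : A)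
    (r : ℕ → A) :
    r ∈ fol XZ (s ++ [a]) ↔ ∃ r' ∈ fol XZ s, r' 1 = a ∧ ∀ n, r n = r' (n + 1) := by
  constructor
  · rintro ⟨b, hb, hend, hr⟩
    obtain ⟨ha, hs⟩ :=
      (endsWith_append_singleton_iff (x := fun p => b (p + -1)) (by simp) s a).1 hend
    refine ⟨fun n => b (n + -1), ⟨_, hXZ b hb (-1), hs, fun _ => rfl⟩, by simpa using ha,
      fun n => by simp [hr]⟩
  · rintro ⟨r', ⟨c, hc, hs, hr'⟩, ha, hr⟩
    refine ⟨fun p => c (p + 1), hXZ c hc 1, ?_, fun n => by simp [hr, hr']⟩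
    exact (endsWith_append_singleton_iff (fun _ => rfl) s a).2 ⟨by simpa [hr'] using ha, hs⟩

lemma fol_append_singleton_congr (hXZ : ShiftInvariant XZ) {s t : List A} (a : A)
    (h : fol XZ s = fol XZ t) :
    fol XZ (s ++ [a]) = fol XZ (t ++ [a]) := by
  ext r
  rw [hXZ.mem_fol_append_singleton_iff, hXZ.mem_fol_append_singleton_iff, h]

lemma not_significant_append_singleton (hXZ : ShiftInvariant XZ) {p : List A} (hp : p ≠ [])
    (hns : ¬ Significant XZ p) (a : A) : ¬ Significant XZ (p ++ [a]) := by
  intro hsig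
  have hfol := hXZ.fol_append_singleton_congr a (fol_tail_eq_of_not_significant XZ hp hns)
  rw [← List.tail_append_of_ne_nil hp] at hfol
  exact hsig.2.ne hfol

lemma sigForm_append_singleton (hXZ : ShiftInvariant XZ) {w u v : List A} {a : A}
    (hw : SigForm XZ w u) (hv : SigForm XZ (u ++ [a]) v) : SigForm XZ (w ++ [a]) v := by
  obtain ⟨huw, -, humax⟩ := hw
  obtain ⟨hvu, hvsig, hvmax⟩ := hv
  refine ⟨hvu.trans (List.suffix_append_self_iff.2 huw), hvsig, fun v' hv' hsig' => ?_⟩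
  obtain hnil | ⟨p, rfl, hpw⟩ := List.suffix_concat_iff.1 hv'
  · exact absurd hnil hsig'.1
  by_cases hpu : p.length ≤ u.length
  · exact hvmax _ (List.suffix_append_self_iff.2 (List.suffix_of_suffix_length_le hpw huw hpu))
      hsig'
  · have hp : p ≠ [] := by rintro rfl; simp at hpu
    have hns : ¬ Significant XZ p := fun hsig => hpu (humax p hpw hsig)
    exact absurd hsig' (hXZ.not_significant_append_singleton hp hns a)

end ShiftInvariant

end

theorem stmt_7_general {A : Type*}
    (Xp : Set (ℕ → A)) (n : ℕ)
    (α : ℕ → List A) (a : ℕ → A)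
    (h0 : Significant (natExt Xp) (α 0))
    (hpath : ∀ i : ℕ, i < n → Arrow (natExt Xp) (α i) (α (i + 1)))
    (hlast : ∀ i : ℕ, i ≤ n → (α i).getLast? = some (a i)) :
    ∀ i : ℕ, i ≤ n →
      SigForm (natExt Xp) (α 0 ++ List.ofFn (fun j : Fin i => a (j.1 + 1)))
        (α i) := by
  intro i
  induction i with
  | zero => exact fun _ => by simpa using SigForm.of_significant h0
  | succ i ih =>
    intro hi
    obtain ⟨-, b, hb, -, hsig⟩ := hpath i hi
    obtain rfl : b = a (i + 1) := Option.some.inj (hb.symm.trans (hlast (i + 1) hi))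
    rw [List.ofFn_succ_last, ← List.append_assoc]
    exact (natExt_shiftInvariant Xp).sigForm_append_singleton (ih (Nat.le_of_succ_le hi)) hsig

/-- Let `α_0 → α_1 → ⋯ → α_n` be a finite path on the HB diagram,
with `α_0 = b_{-k}...b_0`, and let `a_i` be the last letter of `α_i`. Then for
all `i ≤ n`, `α_i = sig(b_{-k}...b_0 a_1 a_2 ... a_i)`. -/
theorem stmt_7 {A : Type*} [Fintype A] [TopologicalSpace A] [DiscreteTopology A]
    (Xp : Set (ℕ → A)) (hX : IsSubshift Xp) (n : ℕ)
    (α : ℕ → List A) (a : ℕ → A)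
    (h0 : Significant (natExt Xp) (α 0))
    (hpath : ∀ i : ℕ, i < n → Arrow (natExt Xp) (α i) (α (i + 1)))
    (hlast : ∀ i : ℕ, i ≤ n → (α i).getLast? = some (a i)) :
    ∀ i : ℕ, i ≤ n →
      SigForm (natExt Xp) (α 0 ++ List.ofFn (fun j : Fin i => a (j.1 + 1)))
        (α i) :=
  stmt_7_general Xp n α a h0 hpath hlast
end

section
/- Every point of the natural extension X̃ of a one-sided subshift X⁺ is a limit of shifted sequences of the form σⁿ(0^∞.a⁽ⁿ⁾) with a⁽ⁿ⁾ ∈ X⁺; conversely, every limit point of such a sequence (x_n(a⁽ⁿ⁾))_{n≥0} with a⁽ⁿ⁾ ∈ X⁺ lies in X̃. Hence X̃ is exactly the set of limit points of all such sequences. -/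
open Set Filter Topology

/-- The bisequence `0^∞.a`: zeros at negative indices, `a` at nonnegative ones. -/
def zeroExt {A : Type*} [Zero A] (a : ℕ → A) : ℤ → A :=
  fun k => if 0 ≤ k then a k.toNat else 0

/-!
The bisequence `σⁿ(0^∞.a)` agrees with `k ↦ a (k + n)` on `[-n, ∞)`, so choosing for `a⁽ⁿ⁾`
the right tail of `x` from `-n` gives a sequence converging to `x`. Conversely, once `n ≥ -p` the
right tail at `p` of `σⁿ(0^∞.a⁽ⁿ⁾)` is a shift of `a⁽ⁿ⁾`, hence lies in `X⁺`; right tails depend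
continuously on the bisequence and `X⁺` is closed, so every right tail of a cluster point lies
in `X⁺`.
-/

section ZeroExtension

variable {A : Type*} [Zero A]

theorem zeroExt_of_nonneg (a : ℕ → A) {k : ℤ} (hk : 0 ≤ k) : zeroExt a k = a k.toNat :=
  if_pos hk

theorem tendsto_shift_zeroExt_tails [TopologicalSpace A] (x : ℤ → A) :
    Tendsto (fun n : ℕ => fun k : ℤ => zeroExt (fun m : ℕ => x (-n + m)) (k + n)) atTop (𝓝 x) := by
  refine tendsto_pi_nhds.2 fun k => tendsto_nhds_of_eventually_eq ?_
  filter_upwards [eventually_ge_atTop (-k).toNat] with n hn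
  rw [zeroExt_of_nonneg _ (by omega)]
  congr 1
  omega

theorem shift_zeroExt_tail_eq (a : ℕ → A) {p : ℤ} {n : ℕ} (h : 0 ≤ p + n) :
    (fun m : ℕ => zeroExt a (p + m + n)) = fun m => a (m + (p + n).toNat) := by
  funext m
  rw [zeroExt_of_nonneg _ (by omega)]
  congr 1
  omega

end ZeroExtension

theorem shift_iterate_mem {A : Type*} {Xp : Set (ℕ → A)}
    (hσ : ∀ x ∈ Xp, (fun n => x (n + 1)) ∈ Xp) {a : ℕ → A} (ha : a ∈ Xp) (j : ℕ) :
    (fun m => a (m + j)) ∈ Xp := by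
  induction j with
  | zero => exact ha
  | succ j ih => simpa only [add_right_comm, add_assoc] using hσ _ ih

theorem mem_natExt_of_mapClusterPt {A : Type*} [TopologicalSpace A] [Zero A]
    {Xp : Set (ℕ → A)} (hXp : IsClosed Xp) (hσ : ∀ x ∈ Xp, (fun n => x (n + 1)) ∈ Xp)
    {a : ℕ → ℕ → A} (ha : ∀ n, a n ∈ Xp) {x : ℤ → A}
    (hx : MapClusterPt x atTop (fun n : ℕ => fun k : ℤ => zeroExt (a n) (k + n))) :
    x ∈ natExt Xp := by
  intro p
  have hcont : Continuous fun y : ℤ → A => fun m : ℕ => y (p + m) :=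
    continuous_pi fun m => continuous_apply _
  refine hXp.mem_of_mapClusterPt (hx.continuousAt_comp hcont.continuousAt) ?_
  filter_upwards [eventually_ge_atTop (-p).toNat] with n hn
  simp only [Function.comp_def, shift_zeroExt_tail_eq (a n) (show 0 ≤ p + n by omega)]
  exact shift_iterate_mem hσ (ha n) _

theorem stmt_15_general {A : Type*} [TopologicalSpace A]
    [Zero A] (Xp : Set (ℕ → A)) (hX : IsSubshift Xp) :
    (∀ x ∈ natExt Xp, ∃ a : ℕ → (ℕ → A), (∀ n, a n ∈ Xp) ∧
      Filter.Tendsto (fun n : ℕ => fun k : ℤ => zeroExt (a n) (k + n))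
        Filter.atTop (nhds x)) ∧
    (∀ a : ℕ → (ℕ → A), (∀ n, a n ∈ Xp) → ∀ x : ℤ → A,
      MapClusterPt x Filter.atTop
        (fun n : ℕ => fun k : ℤ => zeroExt (a n) (k + n)) →
      x ∈ natExt Xp) :=
  ⟨fun x hx => ⟨_, fun n => hx (-n), tendsto_shift_zeroExt_tails x⟩,
    fun _ ha _ hx => mem_natExt_of_mapClusterPt hX.2.1 hX.2.2 ha hx⟩

/-- Every point of `X̃` is a limit of the shifted sequences
`σⁿ(0^∞.a⁽ⁿ⁾)` with `a⁽ⁿ⁾ ∈ X⁺`, and conversely every cluster point of such a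
sequence lies in `X̃`; hence `X̃` is exactly the set of such limit points. -/
theorem stmt_15 {A : Type*} [Fintype A] [TopologicalSpace A] [DiscreteTopology A]
    [Zero A] (Xp : Set (ℕ → A)) (hX : IsSubshift Xp) :
    (∀ x ∈ natExt Xp, ∃ a : ℕ → (ℕ → A), (∀ n, a n ∈ Xp) ∧
      Filter.Tendsto (fun n : ℕ => fun k : ℤ => zeroExt (a n) (k + n))
        Filter.atTop (nhds x)) ∧
    (∀ a : ℕ → (ℕ → A), (∀ n, a n ∈ Xp) → ∀ x : ℤ → A,
      MapClusterPt x Filter.atTop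
        (fun n : ℕ => fun k : ℤ => zeroExt (a n) (k + n)) →
      x ∈ natExt Xp) :=
  stmt_15_general Xp hX
end

section
/- The Morse sequence contains no block of the form BBb, where B is a nonempty block and b is the first letter of B (i.e., it is overlap-free). -/
open Set Filter Topology

/-! An overlap of period `k` at `p` is a word `a_p … a_{p+2k}` with `a_{p+i} = a_{p+k+i}` for
`i ≤ k`. Since `morse (2j + r) = morse j + r`, reading every other letter of an overlap of even
period `k` in `morse` gives one of period `k / 2`, so by induction only odd `k` must be excluded.
`morse` changes letter between positions `2j` and `2j + 1`; for odd `k` one of `p + i`, `p + k + i`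
is even, so `morse` changes letter at `n` and `n + 2` for `n = p` and for `n = p + k`, one of which
is odd. For `n = 2j + 1` this means `morse j = morse (j + 1) = morse (j + 2)`, impossible since one of
`j`, `j + 1` is even. -/

variable {α : Type*}

def IsOverlapAt (a : ℕ → α) (p k : ℕ) : Prop :=
  ∀ i ≤ k, a (p + i) = a (p + k + i)

theorem isOverlapAt_of_occursAt {a : ℕ → α} {B : List α} (hB : B ≠ []) {p : ℕ}
    (hocc : OccursAt (B ++ B ++ [B.head hB]) a p) : IsOverlapAt a p B.length := by
  have hlen : 0 < B.length := List.length_pos_iff.mpr hB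
  intro i hi
  have h₁ := hocc ⟨i, by simp only [List.length_append, List.length_singleton]; omega⟩
  have h₂ := hocc ⟨B.length + i, by simp only [List.length_append, List.length_singleton]; omega⟩
  simp only [List.get_eq_getElem] at h₁ h₂
  rw [add_assoc, h₁, h₂]
  simp only [List.getElem_append, List.length_append]
  split_ifs <;> try omega
  · congr 1; omega
  · simp [show i = B.length by omega, List.head_eq_getElem]

theorem IsOverlapAt.succ_ne_iff {a : ℕ → α} {p k i : ℕ} (h : IsOverlapAt a p k)
    (hi : i + 1 ≤ k) : a (p + i + 1) ≠ a (p + i) ↔ a (p + k + i + 1) ≠ a (p + k + i) := by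
  rw [h i (by omega), add_assoc p, h (i + 1) hi, add_assoc (p + k)]

theorem morse_two_mul_add (j : ℕ) (r : Fin 2) : morse (2 * j + r) = morse j + r := by
  rcases eq_or_ne j 0 with rfl | hj
  · fin_cases r <;> rfl
  · rw [morse, morse, add_comm, Nat.digits_add 2 one_lt_two _ _ r.isLt (Or.inr hj),
      List.sum_cons]
    ext
    simp only [Fin.val_add, Fin.val_natCast]
    omega

theorem morse_succ_ne_of_even {n : ℕ} (hn : Even n) : morse (n + 1) ≠ morse n := by
  obtain ⟨j, rfl⟩ := hn
  have h₀ := morse_two_mul_add j 0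
  have h₁ := morse_two_mul_add j 1
  simp only [Fin.val_zero, Fin.val_one, add_zero] at h₀ h₁
  rw [← two_mul, h₀, h₁]
  exact fun h => by simp at h

theorem morse_ne_or_ne (n : ℕ) : morse (n + 1) ≠ morse n ∨ morse (n + 2) ≠ morse (n + 1) := by
  rcases Nat.even_or_odd n with hn | hn
  · exact .inl (morse_succ_ne_of_even hn)
  · exact .inr (morse_succ_ne_of_even hn.add_one)

theorem morse_add_three_eq_of_odd {n : ℕ} (hn : Odd n) (h : morse (n + 1) ≠ morse n) :
    morse (n + 3) = morse (n + 2) := by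
  obtain ⟨j, rfl⟩ := hn
  have e₁ := morse_two_mul_add j 1
  have e₂ := morse_two_mul_add (j + 1) 0
  have e₃ := morse_two_mul_add (j + 1) 1
  have e₄ := morse_two_mul_add (j + 2) 0
  simp only [Fin.val_zero, Fin.val_one, add_zero, mul_add] at e₁ e₂ e₃ e₄
  rw [show 2 * j + 1 + 1 = 2 * j + 2 by ring, e₂, e₁] at h
  rw [show 2 * j + 1 + 3 = 2 * j + 4 by ring, show 2 * j + 1 + 2 = 2 * j + 2 + 1 by ring, e₃, e₄]
  have hj := morse_ne_or_ne j
  revert h hj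
  generalize morse j = x; generalize morse (j + 1) = y; generalize morse (j + 2) = z
  revert x y z; decide

theorem IsOverlapAt.morse_half {p m : ℕ} (h : IsOverlapAt morse p (2 * m)) :
    IsOverlapAt morse (p / 2) m := by
  let r : Fin 2 := ⟨p % 2, Nat.mod_lt _ two_pos⟩
  intro i hi
  have h₂ᵢ := h (2 * i) (by omega)
  rw [show p + 2 * i = 2 * (p / 2 + i) + r by dsimp only [r]; omega,
    show p + 2 * m + 2 * i = 2 * (p / 2 + m + i) + r by dsimp only [r]; omega,
    morse_two_mul_add, morse_two_mul_add] at h₂ᵢ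
  exact add_right_cancel h₂ᵢ

theorem not_isOverlapAt_morse_odd (p c : ℕ) : ¬ IsOverlapAt morse p (2 * c + 1) := by
  intro h
  rcases c.eq_zero_or_pos with rfl | hc
  · have h₀ := h 0 (by omega)
    have h₁ := h 1 (by omega)
    simp only [add_zero, mul_zero, zero_add] at h₀ h₁
    rcases morse_ne_or_ne p with hne | hne
    · exact hne h₀.symm
    · exact hne h₁.symm
  have change : ∀ i ≤ 2, morse (p + i + 1) ≠ morse (p + i) ∧
      morse (p + (2 * c + 1) + i + 1) ≠ morse (p + (2 * c + 1) + i) := by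
    intro i hi
    have hiff := h.succ_ne_iff (i := i) (by omega)
    rcases Nat.even_or_odd (p + i) with he | ho
    · exact ⟨morse_succ_ne_of_even he, hiff.mp (morse_succ_ne_of_even he)⟩
    · have he : Even (p + (2 * c + 1) + i) := by
        rw [Nat.odd_iff] at ho; rw [Nat.even_iff]; omega
      exact ⟨hiff.mpr (morse_succ_ne_of_even he), morse_succ_ne_of_even he⟩
  obtain ⟨n, hn, h₀, h₂⟩ : ∃ n, Odd n ∧ morse (n + 1) ≠ morse n ∧ morse (n + 3) ≠ morse (n + 2) := by
    rcases Nat.even_or_odd p with hp | hp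
    · refine ⟨p + (2 * c + 1), hp.add_odd (odd_two_mul_add_one c), (change 0 (by omega)).2, ?_⟩
      simpa only [add_assoc] using (change 2 le_rfl).2
    · refine ⟨p, hp, (change 0 (by omega)).1, ?_⟩
      simpa only [add_assoc] using (change 2 le_rfl).1
  exact h₂ (morse_add_three_eq_of_odd hn h₀)

theorem not_isOverlapAt_morse {p k : ℕ} (hk : 0 < k) : ¬ IsOverlapAt morse p k := by
  induction k using Nat.strong_induction_on generalizing p with
  | _ k ih =>
    obtain ⟨m, rfl | rfl⟩ := Nat.even_or_odd' k
    · exact fun h => ih m (by omega) (by omega) h.morse_half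
    · exact not_isOverlapAt_morse_odd p m

/-- The Morse sequence contains no block of the form `BBb`, where
`B` is a nonempty block and `b` is the first letter of `B` (overlap-freeness). -/
theorem stmt_17 :
    ∀ (B : List (Fin 2)) (h : B ≠ []) (p : ℕ),
      ¬ OccursAt (B ++ B ++ [B.head h]) morse p := by
  intro B h p hocc
  exact not_isOverlapAt_morse (List.length_pos_iff.mpr h) (isOverlapAt_of_occursAt h hocc)
end

section
/- Let a_{-n+1}...a_0 be a block of length n ≥ 2 in the language of the Morse minimal subshift X_ω⁺. Then a_{-n+1}...a_0 is a significant block of the natural extension X̃_ω if and only if both 0 a_{-n+2}...a_0 and 1 a_{-n+2}...a_0 are in the language of X_ω⁺. -/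
open Set Filter Topology

/-!
For a ray `r` following `u` but not `a u`, the letter preceding `u` in a point realizing `r` is
some `d ≠ a`, and `d u` is then in the language. Conversely, let `d ≠ a` with `d u` in the
language. If `a u` were not significant, every ray following `d u` would follow `u`, hence `a u`,
so each of the infinitely many occurrences of `d u` in `ω` would start (at `u`) a ray extendable
to the left by both letters. These rays are pairwise distinct because `ω` is not eventually
periodic. But every such left special ray raises `p(n + 1) - p(n)` by one for large `n`, which
the linear bound `p(n) ≤ 8n` on the complexity of `ω`, coming from `p(n) ≤ 2 p(⌊n/2⌋ + 1)`,
does not allow for nine of them.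
-/

open Function

section Subshift

variable {A : Type*} {x : ℕ → A}

lemma occursAt_ofFn {m : ℕ} (f : Fin m → A) (y : ℕ → A) (p : ℕ) :
    OccursAt (List.ofFn f) y p ↔ ∀ j : Fin m, y (p + j) = f j := by
  simp [OccursAt, Fin.forall_iff]

lemma occursAt_cons {c : A} {t : List A} {y : ℕ → A} {p : ℕ} :
    OccursAt (c :: t) y p ↔ y p = c ∧ OccursAt t y (p + 1) := by
  simp [OccursAt, Fin.forall_fin_succ, add_assoc, add_comm 1]

lemma endsWith_cons_iff {b : ℤ → A} {c : A} {t : List A} :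
    EndsWith b (c :: t) ↔ b (-t.length) = c ∧ EndsWith b t := by
  simp [EndsWith, Fin.forall_fin_succ, sub_sub_eq_add_sub]

lemma fol_subset_fol_tail (XZ : Set (ℤ → A)) (w : List A) : fol XZ w ⊆ fol XZ w.tail := by
  rcases w with _ | ⟨c, t⟩
  · exact subset_rfl
  · rintro r ⟨b, hb, he, hr⟩
    exact ⟨b, hb, (endsWith_cons_iff.1 he).2, hr⟩

lemma shift_mem_natExt {Xp : Set (ℕ → A)} {b : ℤ → A} (hb : b ∈ natExt Xp) (q : ℤ) :
    (fun z => b (z + q)) ∈ natExt Xp := fun p => by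
  simpa only [add_right_comm] using hb (p + q)

lemma occursN_window_of_mem_natExt {b : ℤ → A} (hb : b ∈ natExt (OrbitClosure x))
    (p : ℤ) (m : ℕ) : OccursN (List.ofFn fun i : Fin m => b (p + i)) x :=
  hb p _ ⟨0, (occursAt_ofFn _ _ _).2 fun j => by simp⟩

lemma OccursN.of_cons {c : A} {w : List A} (h : OccursN (c :: w) x) : OccursN w x :=
  let ⟨p, hp⟩ := h
  ⟨p + 1, (occursAt_cons.1 hp).2⟩

lemma EndsWith.occursN {b : ℤ → A} {w : List A} (h : EndsWith b w)
    (hb : b ∈ natExt (OrbitClosure x)) : OccursN w x :=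
  hb (1 - w.length) w ⟨0, fun i => by convert h i using 2; push_cast; ring⟩

lemma exists_ne_cons_occursN_of_significant {a : A} {u : List A}
    (h : Significant (natExt (OrbitClosure x)) (a :: u)) : ∃ d ≠ a, OccursN (d :: u) x := by
  obtain ⟨r, ⟨b, hb, hbu, hbr⟩, hr⟩ := Set.exists_of_ssubset h.2
  exact ⟨b (-u.length), fun hd => hr ⟨b, hb, endsWith_cons_iff.2 ⟨hd, hbu⟩, hbr⟩,
    (endsWith_cons_iff.2 ⟨rfl, hbu⟩).occursN hb⟩

def Recurrent (x : ℕ → A) : Prop :=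
  ∀ w : List A, OccursN w x → ∀ M, ∃ p, M ≤ p ∧ OccursAt w x p

lemma Recurrent.exists_cons_occursN (hx : Recurrent x) {w : List A} (hw : OccursN w x) :
    ∃ c, OccursN (c :: w) x := by
  obtain ⟨p, hp, hpw⟩ := hx w hw 1
  refine ⟨x (p - 1), p - 1, occursAt_cons.2 ⟨rfl, ?_⟩⟩
  rwa [Nat.sub_add_cancel hp]

theorem Recurrent.exists_mem_natExt [Finite A] (hx : Recurrent x) :
    ∃ e ∈ natExt (OrbitClosure x), ∀ n : ℕ, e n = x n := by
  have hprefix : ∀ m, ∃ p, m ≤ p ∧ ∀ i < m, x (p + i) = x i := fun m => by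
    obtain ⟨p, hmp, hp⟩ :=
      hx (List.ofFn fun i : Fin m => x i) ⟨0, (occursAt_ofFn _ _ _).2 fun j => by simp⟩ m
    exact ⟨p, hmp, fun i hi => (occursAt_ofFn _ _ _).1 hp ⟨i, hi⟩⟩
  choose p hmp hp using hprefix
  -- `c m` re-centres `x` at a late return of its prefix of length `m`; `e` is an ultralimit
  let c : ℕ → ℤ → A := fun m z => x (p m + z).toNat
  let U : Ultrafilter ℕ := Ultrafilter.of atTop
  have hU : ∀ N, ∀ᶠ m in (U : Filter ℕ), N ≤ m := fun N =>
    Ultrafilter.of_le atTop (eventually_ge_atTop N)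
  have hlim : ∀ z, ∃ a, ∀ᶠ m in (U : Filter ℕ), c m z = a := fun z => by
    obtain ⟨a, ha⟩ := (U.map (c · z)).eq_pure_of_finite
    have hmap : ∀ᶠ b in ((U.map (c · z) : Ultrafilter A) : Filter A), b = a := by
      rw [ha, Ultrafilter.coe_pure]; exact eventually_pure.2 rfl
    exact ⟨a, hmap⟩
  choose e he using hlim
  refine ⟨e, fun q w ⟨s, hs⟩ => ?_, fun n => ?_⟩
  · obtain ⟨m, hm, hce⟩ := ((hU (q + s).natAbs).and
      (eventually_all.2 fun i : Fin w.length => he (q + s + i))).exists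
    refine ⟨(p m + (q + s)).toNat, fun i => ?_⟩
    rw [← hs i]
    show _ = e (q + ((s + i : ℕ) : ℤ))
    rw [show q + ((s + i : ℕ) : ℤ) = q + s + i by push_cast; ring, ← hce i]
    simp only [c]
    have := hmp m
    congr 1
    omega
  · obtain ⟨m, hm, hce⟩ := ((hU (n + 1)).and (he n)).exists
    rw [← hce, ← hp m n (by omega)]
    simp only [c]
    congr 1

lemma Recurrent.shift_mem_fol [Finite A] (hx : Recurrent x) {c : A} {t : List A} {q : ℕ}
    (h : OccursAt (c :: t) x q) :
    (fun k => x (q + t.length + k)) ∈ fol (natExt (OrbitClosure x)) (c :: t) := by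
  obtain ⟨e, he, hex⟩ := hx.exists_mem_natExt
  refine ⟨fun z => e (z + (q + t.length : ℕ)), shift_mem_natExt he _, fun i => ?_,
    fun k => ?_⟩
  · rw [← h i, ← hex]
    simp only [List.length_cons]
    push_cast
    congr 1
    ring
  · show x _ = e _
    rw [← hex]
    push_cast
    congr 1
    ring

lemma cons_occursN_of_mem_fol {y : ℕ → A} {c : A} {t : List A} (ht : t ≠ [])
    (hy : OccursAt t y 0)
    (h : (fun k => y (t.length - 1 + k)) ∈ fol (natExt (OrbitClosure x)) (c :: t)) (m : ℕ) :
    OccursN (c :: List.ofFn fun i : Fin m => y i) x := by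
  obtain ⟨b, hb, hbe, hby⟩ := h
  obtain ⟨hbc, hbt⟩ := endsWith_cons_iff.1 hbe
  have hlen := List.length_pos_iff.2 ht
  have hb_succ : ∀ j : ℕ, b (-t.length + (j + 1)) = y j := by
    intro j
    rcases lt_or_ge j t.length with hj | hj
    · rw [show -(t.length : ℤ) + (j + 1) = j - (t.length - 1) by ring,
        hbt ⟨j, hj⟩, ← hy ⟨j, hj⟩, zero_add]
    · have := hby (j + 1 - t.length)
      simp only [show t.length - 1 + (j + 1 - t.length) = j by omega] at this
      rw [this]
      congr 1
      omega
  have hlist : c :: List.ofFn (fun i : Fin m => y i) =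
      List.ofFn fun i : Fin (m + 1) => b (-t.length + i) := by
    rw [List.ofFn_succ]
    simp [hbc, hb_succ]
  rw [hlist]
  exact occursN_window_of_mem_natExt hb _ _

def IsLeftSpecialRay (x s : ℕ → A) : Prop :=
  ∃ a b, a ≠ b ∧ ∀ m, OccursN (a :: List.ofFn fun i : Fin m => s i) x ∧
    OccursN (b :: List.ofFn fun i : Fin m => s i) x

lemma IsLeftSpecialRay.exists_ne {s : ℕ → A} (h : IsLeftSpecialRay x s) (c : A) (m : ℕ) :
    ∃ d ≠ c, OccursN (d :: List.ofFn fun i : Fin m => s i) x := by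
  obtain ⟨a, b, hab, hs⟩ := h
  by_cases hac : a = c
  · exact ⟨b, hac ▸ hab.symm, (hs m).2⟩
  · exact ⟨a, hac, (hs m).1⟩

def blocks (x : ℕ → A) (n : ℕ) : Set (List A) := {w | w.length = n ∧ OccursN w x}

lemma blocks_finite [Finite A] (x : ℕ → A) (n : ℕ) : (blocks x n).Finite :=
  (List.finite_length_eq A n).subset fun _ hw => hw.1

lemma complexity_le_card_pow [Fintype A] (x : ℕ → A) (n : ℕ) :
    Complexity x n ≤ Fintype.card A ^ n :=
  calc Complexity x n ≤ {w : List A | w.length = n}.ncard :=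
        Set.ncard_le_ncard (fun _ hw => hw.1) (List.finite_length_eq A n)
    _ = Fintype.card A ^ n := by
        rw [← Nat.card_coe_set_eq]
        exact (Nat.card_eq_fintype_card (α := List.Vector A n)).trans (card_vector n)

lemma Recurrent.complexity_add_le [Finite A] (hx : Recurrent x) {K m : ℕ}
    {s : Fin K → ℕ → A} (hs : ∀ j, IsLeftSpecialRay x (s j))
    (hinj : Injective fun j => List.ofFn fun i : Fin m => s j i) :
    Complexity x m + K ≤ Complexity x (m + 1) := by
  set pre := fun j => List.ofFn fun i : Fin m => s j i
  have hext : ∀ v : blocks x m, ∃ c, c :: v.1 ∈ blocks x (m + 1) := fun v =>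
    (hx.exists_cons_occursN v.2.2).imp fun c hc => ⟨by simp [v.2.1], hc⟩
  choose ext hext using hext
  have hpre (j) : pre j ∈ blocks x m :=
    have ⟨_, _, _, hsj⟩ := hs j
    ⟨by simp [pre], (hsj m).1.of_cons⟩
  have hother (j) : ∃ d ≠ ext ⟨pre j, hpre j⟩, d :: pre j ∈ blocks x (m + 1) :=
    ((hs j).exists_ne _ m).imp fun d hd => ⟨hd.1, by simp [pre], hd.2⟩
  choose other hother_ne hother using hother
  let g : blocks x m ⊕ Fin K → blocks x (m + 1) :=
    Sum.elim (fun v => ⟨ext v :: v.1, hext v⟩) (fun j => ⟨other j :: pre j, hother j⟩)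
  have hg : Injective g := by
    rintro (v | j) (v' | j') h <;>
      simp only [g, Sum.elim_inl, Sum.elim_inr, Subtype.mk.injEq, List.cons.injEq] at h
    · exact congrArg Sum.inl (Subtype.ext h.2)
    · obtain rfl : v = ⟨pre j', hpre j'⟩ := Subtype.ext h.2
      exact absurd h.1.symm (hother_ne j')
    · obtain rfl : v' = ⟨pre j, hpre j⟩ := Subtype.ext h.2.symm
      exact absurd h.1 (hother_ne j)
    · exact congrArg Sum.inr (hinj h.2)
  have := (blocks_finite x m).to_subtype
  have := (blocks_finite x (m + 1)).to_subtype
  have hcard := Nat.card_le_card_of_injective g hg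
  rwa [Nat.card_sum, Nat.card_fin, Nat.card_coe_set_eq, Nat.card_coe_set_eq] at hcard

lemma eventually_injective_prefixes {K : ℕ} {s : Fin K → ℕ → A} (hs : Injective s) :
    ∀ᶠ m in atTop, Injective fun j => List.ofFn fun i : Fin m => s j i := by
  have hpair : ∀ j j', ∀ᶠ m in atTop,
      (List.ofFn fun i : Fin m => s j i) = (List.ofFn fun i : Fin m => s j' i) → j = j' := by
    intro j j'
    by_cases hjj : j = j'
    · exact Eventually.of_forall fun _ _ => hjj
    obtain ⟨k, hk⟩ : ∃ k, s j k ≠ s j' k := by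
      by_contra! h
      exact hjj (hs (funext h))
    filter_upwards [eventually_gt_atTop k] with m hm heq
    exact absurd (by simpa using congrFun (List.ofFn_inj.1 heq) ⟨k, hm⟩) hk
  filter_upwards [eventually_all.2 fun j => eventually_all.2 (hpair j)] with m hm j j'
  exact hm j j'

theorem Recurrent.finite_setOf_isLeftSpecialRay [Finite A] (hx : Recurrent x) {C : ℕ}
    (hC : ∀ᶠ n in atTop, Complexity x n ≤ C * n) : {s | IsLeftSpecialRay x s}.Finite := by
  by_contra hinf
  let emb := Set.Infinite.natEmbedding _ hinf
  let s : Fin (C + 1) → ℕ → A := fun j => emb j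
  have hs : Injective s := fun j j' h => Fin.ext (emb.injective (Subtype.ext h))
  obtain ⟨M, hM⟩ := eventually_atTop.1 (eventually_injective_prefixes hs)
  have hgrow : ∀ t, (C + 1) * t ≤ Complexity x (M + t) := by
    intro t
    induction t with
    | zero => simp
    | succ t ih =>
      have := hx.complexity_add_le (fun j => (emb j).2) (hM (M + t) (by omega))
      rw [← add_assoc]
      linarith
  obtain ⟨N, hN⟩ := eventually_atTop.1 hC
  have := (hgrow (N + C * M + 1)).trans (hN _ (by omega))
  linarith

theorem significant_cons_iff [Finite A] (hx : Recurrent x)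
    (haper : Injective fun t k => x (t + k)) (hLS : {s | IsLeftSpecialRay x s}.Finite)
    {a : A} {u : List A} (hu : u ≠ []) :
    Significant (natExt (OrbitClosure x)) (a :: u) ↔ ∃ d ≠ a, OccursN (d :: u) x := by
  refine ⟨exists_ne_cons_occursN_of_significant, fun ⟨d, hda, hd⟩ =>
    ⟨List.cons_ne_nil _ _, ?_⟩⟩
  refine (fol_subset_fol_tail _ _).ssubset_of_ne fun heq => ?_
  have hocc : {q | OccursAt (d :: u) x q}.Infinite := Set.infinite_of_forall_exists_gt fun M =>
    (hx _ hd (M + 1)).imp fun q hq => ⟨hq.2, by omega⟩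
  refine Set.infinite_of_injOn_mapsTo (f := fun q k => x (q + 1 + k))
    (fun q _ q' _ h => Nat.succ_injective (haper h)) (fun q hq => ?_) hocc hLS
  -- the ray read from just after `d` follows `d :: u`, hence `u`, hence `a :: u`
  have hy : OccursAt u (fun k => x (q + 1 + k)) 0 := fun i => by
    simpa using (occursAt_cons.1 hq).2 i
  have hfol : (fun k => x (q + 1 + (u.length - 1 + k))) ∈
      fol (natExt (OrbitClosure x)) (d :: u) := by
    convert hx.shift_mem_fol hq using 3
    have := List.length_pos_iff.2 hu
    omega
  have hfol' := fol_subset_fol_tail _ _ hfol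
  rw [List.tail_cons] at heq hfol'
  rw [← heq] at hfol'
  exact ⟨a, d, hda.symm, fun m =>
    ⟨cons_occursN_of_mem_fol hu hy hfol' m, cons_occursN_of_mem_fol hu hy hfol m⟩⟩

end Subshift

section Morse

lemma morse_two_mul (n : ℕ) : morse (2 * n) = morse n := by
  rcases Nat.eq_zero_or_pos n with rfl | hn
  · rfl
  · rw [morse, Nat.digits_def' one_lt_two (by omega)]
    simp [morse]

lemma morse_two_mul_add_one (n : ℕ) : morse (2 * n + 1) = morse n + 1 := by
  rw [morse, Nat.digits_def' one_lt_two (by omega), show (2 * n + 1) / 2 = n by omega,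
    show (2 * n + 1) % 2 = 1 by omega, List.sum_cons]
  ext
  simp [morse, Fin.val_add]
  omega

lemma morse_two_pow_add {k j : ℕ} (hj : j < 2 ^ k) : morse (2 ^ k + j) = morse j + 1 := by
  induction k generalizing j with
  | zero => obtain rfl : j = 0 := by simpa using hj
            rfl
  | succ k ih =>
    obtain ⟨m, rfl | rfl⟩ := Nat.even_or_odd' j
    · rw [pow_succ', ← mul_add, morse_two_mul, morse_two_mul, ih (by omega)]
    · rw [pow_succ', ← add_assoc, ← mul_add, morse_two_mul_add_one, morse_two_mul_add_one,
        ih (by omega)]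

lemma morse_three_mul_two_pow_add {k j : ℕ} (hj : j < 2 ^ k) :
    morse (3 * 2 ^ k + j) = morse j := by
  rw [show 3 * 2 ^ k + j = 2 ^ (k + 1) + (2 ^ k + j) by ring, morse_two_pow_add (by omega),
    morse_two_pow_add hj, add_assoc, show (1 + 1 : Fin 2) = 0 from rfl, add_zero]

theorem morse_recurrent : Recurrent morse := fun w ⟨p, hp⟩ M => by
  obtain ⟨k, hk⟩ : ∃ k, p + w.length + M < 2 ^ k := ⟨_, Nat.lt_two_pow_self⟩
  refine ⟨3 * 2 ^ k + p, by omega, fun i => ?_⟩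
  have := i.2
  rw [add_assoc, morse_three_mul_two_pow_add (by omega)]
  exact hp i

lemma morse_periodic_of_eventually_periodic {p N : ℕ}
    (h : ∀ n ≥ N, morse (n + p) = morse n) (n : ℕ) :
    morse (n + p) = morse n := by
  obtain ⟨k, hk⟩ : ∃ k, N + n + p < 2 ^ k := ⟨_, Nat.lt_two_pow_self⟩
  have := h (2 ^ k + n) (by omega)
  rwa [add_assoc, morse_two_pow_add (by omega), morse_two_pow_add (by omega), add_left_inj] at this

lemma morse_not_eventually_periodic {p N : ℕ} (hp : 0 < p) :
    ¬ ∀ n ≥ N, morse (n + p) = morse n := by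
  induction p using Nat.strong_induction_on generalizing N with
  | _ p ih =>
  intro h
  have hper := morse_periodic_of_eventually_periodic h
  obtain ⟨q, rfl | rfl⟩ := Nat.even_or_odd' p
  · refine ih q (by omega) (by omega) (N := 0) fun n _ => ?_
    rw [← morse_two_mul, ← morse_two_mul n, mul_add]
    exact hper (2 * n)
  · -- an odd period forces `morse (n + 1) = morse n` for `n ≥ q`
    have h1 : ∀ n ≥ q, morse (n + 1) = morse n := fun n hn => by
      obtain ⟨m, rfl⟩ := Nat.exists_eq_add_of_le hn
      have e1 := hper (2 * m)
      have e2 := hper (2 * m + 1)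
      rw [show 2 * m + (2 * q + 1) = 2 * (q + m) + 1 by ring, morse_two_mul_add_one,
        morse_two_mul] at e1
      rw [show 2 * m + 1 + (2 * q + 1) = 2 * (q + m + 1) by ring, morse_two_mul,
        morse_two_mul_add_one] at e2
      rw [e2, ← e1, add_assoc, show (1 + 1 : Fin 2) = 0 from rfl, add_zero]
    exact absurd (morse_periodic_of_eventually_periodic h1 0) (by decide)

theorem morse_shift_injective : Injective fun t k => morse (t + k) := by
  intro t t' h
  by_contra hne
  wlog hlt : t < t' generalizing t t'
  · exact this h.symm (Ne.symm hne) (by omega)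
  refine morse_not_eventually_periodic (p := t' - t) (N := t) (by omega) fun n hn => ?_
  have := congrFun h (n - t)
  simp only [show t' + (n - t) = n + (t' - t) by omega, show t + (n - t) = n by omega] at this
  exact this.symm

lemma morse_eq_of_mod_two_eq {a b : ℕ} (hmod : a % 2 = b % 2)
    (hdiv : morse (a / 2) = morse (b / 2)) :
    morse a = morse b := by
  rw [← Nat.div_add_mod a 2, ← Nat.div_add_mod b 2, ← hmod]
  rcases Nat.mod_two_eq_zero_or_one a with h | h <;> rw [h]
  · rw [add_zero, add_zero, morse_two_mul, morse_two_mul, hdiv]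
  · rw [morse_two_mul_add_one, morse_two_mul_add_one, hdiv]

-- A block of length `n` at position `P` is determined by `P % 2` and the block of length
-- `n / 2 + 1` at position `P / 2`.
lemma complexity_morse_le_two_mul (n : ℕ) :
    Complexity morse n ≤ 2 * Complexity morse (n / 2 + 1) := by
  choose P hP using fun v : blocks morse n => v.2.2
  let f : blocks morse n → Fin 2 × blocks morse (n / 2 + 1) := fun v =>
    (⟨P v % 2, Nat.mod_lt _ two_pos⟩,
      ⟨List.ofFn fun j : Fin (n / 2 + 1) => morse (P v / 2 + j),
        by simp, P v / 2, (occursAt_ofFn _ _ _).2 fun _ => rfl⟩)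
  have hf : Injective f := by
    intro v v' h
    simp only [f, Prod.mk.injEq, Fin.mk.injEq] at h
    obtain ⟨hmod, hhalf⟩ := h
    replace hhalf := List.ofFn_inj.1 (congrArg Subtype.val hhalf)
    refine Subtype.ext (List.ext_get (by rw [v.2.1, v'.2.1]) fun i hi hi' => ?_)
    rw [← hP v ⟨i, hi⟩, ← hP v' ⟨i, hi'⟩]
    refine morse_eq_of_mod_two_eq (by omega) ?_
    have hj : (P v % 2 + i) / 2 < n / 2 + 1 := by have := v.2.1; omega
    convert congrFun hhalf ⟨_, hj⟩ using 2 <;> simp <;> omega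
  have := (blocks_finite morse n).to_subtype
  have := (blocks_finite morse (n / 2 + 1)).to_subtype
  have hcard := Nat.card_le_card_of_injective f hf
  rwa [Nat.card_prod, Nat.card_fin, Nat.card_coe_set_eq, Nat.card_coe_set_eq] at hcard

lemma complexity_morse_le {n : ℕ} (hn : 3 ≤ n) : Complexity morse n ≤ 8 * n - 16 := by
  induction n using Nat.strong_induction_on with
  | _ n ih =>
  rcases Nat.lt_or_ge n 4 with h4 | h4
  · obtain rfl : n = 3 := by omega
    exact complexity_le_card_pow morse 3
  · have := ih (n / 2 + 1) (by omega) (by omega)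
    have := complexity_morse_le_two_mul n
    omega

end Morse

/-- A block `a_{-n+1}...a_0` of length `n ≥ 2` in the language of
the Morse minimal subshift is a significant block of the natural extension
`X̃_ω` iff both `0 a_{-n+2}...a_0` and `1 a_{-n+2}...a_0` are in the language. -/
theorem stmt_18 (w : List (Fin 2)) (hlen : 2 ≤ w.length)
    (hw : OccursN w morse) :
    Significant (natExt (OrbitClosure morse)) w ↔
      (OccursN ((0 : Fin 2) :: w.tail) morse ∧
       OccursN ((1 : Fin 2) :: w.tail) morse) := by
  obtain _ | ⟨a, u⟩ := w
  · simp at hlen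
  have hu : u ≠ [] := List.ne_nil_of_length_pos (by simp at hlen; omega)
  have hLS : {s | IsLeftSpecialRay morse s}.Finite :=
    morse_recurrent.finite_setOf_isLeftSpecialRay (C := 8)
      (eventually_atTop.2 ⟨3, fun n hn => (complexity_morse_le hn).trans (Nat.sub_le _ _)⟩)
  rw [significant_cons_iff morse_recurrent morse_shift_injective hLS hu, List.tail_cons]
  constructor
  · rintro ⟨d, hda, hd⟩
    fin_cases a <;> fin_cases d
    exacts [absurd rfl hda, ⟨hw, hd⟩, ⟨hd, hw⟩, absurd rfl hda]
  · rintro ⟨h0, h1⟩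
    fin_cases a
    exacts [⟨1, by decide, h1⟩, ⟨0, by decide, h0⟩]
end
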